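/- Let Π = W + Σₐ Vₐ ∧ ∂/∂tᵃ be a bivector field on M × ℝʰ, where W is a bivector field on M and the Vₐ are vector fields on M, all independent of the coordinates tᵃ. Then the Schouten–Nijenhuis bracket [Π,Π] vanishes if and only if [W,W] = 0, L_{Vₐ} W = 0 for all a, and [Vₐ,V_b] = 0 for all a,b. -/

import Mathlib

open scoped BigOperators

/- Coordinate model of multivector calculus on the manifold `M = ℝ^ι`:
vector fields, 1-forms, bivector and trivector fields are given by their
(smooth) components. -/

/-- Partial derivative `∂_l f`. -/
noncomputable def pd {ι : Type*} [Fintype ι] [DecidableEq ι] (l : ι)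
    (f : (ι → ℝ) → ℝ) (x : ι → ℝ) : ℝ :=
  fderiv ℝ f x (Pi.single l 1)

/-- `♯_P α`, defined by `β(♯_P α) = P(α,β)`; in components
`(♯_P α)^j = Σᵢ P^{ij} αᵢ`. -/
noncomputable def sharp {ι : Type*} [Fintype ι]
    (P : (ι → ℝ) → ι → ι → ℝ) (α : (ι → ℝ) → ι → ℝ) :
    (ι → ℝ) → ι → ℝ :=
  fun x j => ∑ i, P x i j * α x i

/-- Evaluation `P(α,β) = Σ P^{ij} αᵢ βⱼ` of a bivector field on two 1-forms. -/
noncomputable def evBV {ι : Type*} [Fintype ι]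
    (P : (ι → ℝ) → ι → ι → ℝ) (α β : (ι → ℝ) → ι → ℝ) : (ι → ℝ) → ℝ :=
  fun x => ∑ i, ∑ j, P x i j * α x i * β x j

/-- Evaluation `T(α,β,γ)` of a trivector field on three 1-forms. -/
noncomputable def evTV {ι : Type*} [Fintype ι]
    (T : (ι → ℝ) → ι → ι → ι → ℝ) (α β γ : (ι → ℝ) → ι → ℝ) : (ι → ℝ) → ℝ :=
  fun x => ∑ i, ∑ j, ∑ k, T x i j k * α x i * β x j * γ x k

/-- Lie bracket of vector fields. -/
noncomputable def vbr {ι : Type*} [Fintype ι] [DecidableEq ι]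
    (X Y : (ι → ℝ) → ι → ℝ) : (ι → ℝ) → ι → ℝ :=
  fun x i => ∑ l, (X x l * pd l (fun y => Y y i) x
    - Y x l * pd l (fun y => X y i) x)

/-- Lie derivative of a 1-form along a vector field:
`(L_X α)ᵢ = Σ_l (X^l ∂_l αᵢ + α_l ∂ᵢ X^l)`. -/
noncomputable def lieCov {ι : Type*} [Fintype ι] [DecidableEq ι]
    (X α : (ι → ℝ) → ι → ℝ) : (ι → ℝ) → ι → ℝ :=
  fun x i => ∑ l, (X x l * pd l (fun y => α y i) x
    + α x l * pd i (fun y => X y l) x)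

/-- Lie derivative of a bivector field along a vector field:
`(L_X P)^{ij} = Σ_l (X^l ∂_l P^{ij} − P^{lj} ∂_l X^i − P^{il} ∂_l X^j)`. -/
noncomputable def lieBV {ι : Type*} [Fintype ι] [DecidableEq ι]
    (X : (ι → ℝ) → ι → ℝ) (P : (ι → ℝ) → ι → ι → ℝ) :
    (ι → ℝ) → ι → ι → ℝ :=
  fun x i j => ∑ l, (X x l * pd l (fun y => P y i j) x
    - P x l j * pd l (fun y => X y i) x
    - P x i l * pd l (fun y => X y j) x)

/-- Schouten–Nijenhuis bracket `[P,P]` of a bivector field with itself: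
`[P,P]^{ijk} = 2 Σ_l (P^{il} ∂_l P^{jk} + P^{jl} ∂_l P^{ki} + P^{kl} ∂_l P^{ij})`. -/
noncomputable def schoutenPP {ι : Type*} [Fintype ι] [DecidableEq ι]
    (P : (ι → ℝ) → ι → ι → ℝ) : (ι → ℝ) → ι → ι → ι → ℝ :=
  fun x i j k => 2 * ∑ l, (P x i l * pd l (fun y => P y j k) x
    + P x j l * pd l (fun y => P y k i) x
    + P x k l * pd l (fun y => P y i j) x)

/-- Wedge `E ∧ P` of a vector field with a bivector field:
`(E∧P)^{ijk} = E^i P^{jk} + E^j P^{ki} + E^k P^{ij}`. -/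
noncomputable def wedgeVP {ι : Type*} [Fintype ι]
    (E : (ι → ℝ) → ι → ℝ) (P : (ι → ℝ) → ι → ι → ℝ) :
    (ι → ℝ) → ι → ι → ι → ℝ :=
  fun x i j k => E x i * P x j k + E x j * P x k i + E x k * P x i j

/-- `dα(X,Y) = Σ (∂ᵢ αⱼ − ∂ⱼ αᵢ) X^i Y^j`. -/
noncomputable def dOne {ι : Type*} [Fintype ι] [DecidableEq ι]
    (α X Y : (ι → ℝ) → ι → ℝ) : (ι → ℝ) → ℝ :=
  fun x => ∑ i, ∑ j, (pd i (fun y => α y j) x - pd j (fun y => α y i) x)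
    * X x i * Y x j

/-- Pairing `γ(X) = Σ γ_k X^k` of a 1-form with a vector field. -/
noncomputable def pairCV {ι : Type*} [Fintype ι]
    (γ X : (ι → ℝ) → ι → ℝ) : (ι → ℝ) → ℝ :=
  fun x => ∑ k, γ x k * X x k

/-- The bracket of 1-forms
`{α,β}_P = L_{♯_P α} β − L_{♯_P β} α − d(P(α,β))`. -/
noncomputable def formBr {ι : Type*} [Fintype ι] [DecidableEq ι]
    (P : (ι → ℝ) → ι → ι → ℝ) (α β : (ι → ℝ) → ι → ℝ) :
    (ι → ℝ) → ι → ℝ :=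
  fun x i => lieCov (sharp P α) β x i - lieCov (sharp P β) α x i
    - pd i (evBV P α β) x

/-- Interior product `i(α∧β)T` of a trivector with a decomposable 2-form:
`(i(α∧β)T)^k = Σ_{i,j} αᵢ βⱼ T^{ijk}`. -/
noncomputable def intTV {ι : Type*} [Fintype ι]
    (α β : (ι → ℝ) → ι → ℝ) (T : (ι → ℝ) → ι → ι → ι → ℝ) :
    (ι → ℝ) → ι → ℝ :=
  fun x k => ∑ i, ∑ j, α x i * β x j * T x i j k

/-- The translation-invariant bivector field
`Π = W + Σₐ Vₐ ∧ ∂/∂tᵃ` on `M × ℝʰ` (coordinates indexed by `ι ⊕ Fin h`). -/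
noncomputable def bigPi {ι : Type*} (h : ℕ)
    (W : (ι → ℝ) → ι → ι → ℝ) (Vv : Fin h → (ι → ℝ) → ι → ℝ) :
    ((ι ⊕ Fin h) → ℝ) → (ι ⊕ Fin h) → (ι ⊕ Fin h) → ℝ :=
  fun z I J =>
    match I, J with
    | Sum.inl i, Sum.inl j => W (fun i' => z (Sum.inl i')) i j
    | Sum.inl i, Sum.inr a => Vv a (fun i' => z (Sum.inl i')) i
    | Sum.inr a, Sum.inl i => -Vv a (fun i' => z (Sum.inl i')) i
    | Sum.inr _, Sum.inr _ => 0

noncomputable def restr (ι : Type*) (h : ℕ) : ((ι ⊕ Fin h) → ℝ) →L[ℝ] (ι → ℝ) :=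
  ContinuousLinearMap.pi fun i => ContinuousLinearMap.proj (Sum.inl i)

lemma pd_neg {ι : Type*} [Fintype ι] [DecidableEq ι] (l : ι) (f : (ι → ℝ) → ℝ) (x : ι → ℝ) :
    pd l (fun y => -f y) x = -pd l f x := by
  simp [pd, fderiv_neg]

lemma pd_inl {ι : Type*} [Fintype ι] [DecidableEq ι] {h : ℕ} (l : ι)
    (F : (ι → ℝ) → ℝ) (hF : Differentiable ℝ F) (z : (ι ⊕ Fin h) → ℝ) :
    pd (Sum.inl l) (fun y => F (fun i' => y (Sum.inl i'))) z
      = pd l F (fun i' => z (Sum.inl i')) := by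
  have hre : (fun y : (ι ⊕ Fin h) → ℝ => F (fun i' => y (Sum.inl i')))
      = F ∘ (restr ι h) := rfl
  unfold pd
  rw [hre, fderiv_comp z (hF.differentiableAt) ((restr ι h).differentiableAt),
    (restr ι h).fderiv]
  simp only [ContinuousLinearMap.coe_comp', Function.comp_apply]
  have h1 : (restr ι h) z = fun i' => z (Sum.inl i') := rfl
  have h2 : (restr ι h) (Pi.single (Sum.inl l) 1) = Pi.single l (1:ℝ) := by
    funext i
    simp [restr, Pi.single_apply, ContinuousLinearMap.proj_apply]
  rw [h1, h2]

lemma pd_inr {ι : Type*} [Fintype ι] [DecidableEq ι] {h : ℕ} (a : Fin h)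
    (F : (ι → ℝ) → ℝ) (hF : Differentiable ℝ F) (z : (ι ⊕ Fin h) → ℝ) :
    pd (Sum.inr a) (fun y => F (fun i' => y (Sum.inl i'))) z = 0 := by
  have hre : (fun y : (ι ⊕ Fin h) → ℝ => F (fun i' => y (Sum.inl i')))
      = F ∘ (restr ι h) := rfl
  unfold pd
  rw [hre, fderiv_comp z (hF.differentiableAt) ((restr ι h).differentiableAt),
    (restr ι h).fderiv]
  simp only [ContinuousLinearMap.coe_comp', Function.comp_apply]
  have h2 : (restr ι h) (Pi.single (Sum.inr a) 1) = (0 : ι → ℝ) := by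
    funext i
    simp [restr, Pi.single_apply, ContinuousLinearMap.proj_apply]
  rw [h2, map_zero]

lemma comp_llr {ι : Type*} [Fintype ι] [DecidableEq ι] {h : ℕ}
    (W : (ι → ℝ) → ι → ι → ℝ) (Vv : Fin h → (ι → ℝ) → ι → ℝ)
    (hWskew : ∀ x i j, W x i j = -W x j i)
    (hW : ∀ i j, ContDiff ℝ (⊤ : ℕ∞) fun x => W x i j)
    (hV : ∀ a i, ContDiff ℝ (⊤ : ℕ∞) fun x => Vv a x i)
    (z : (ι ⊕ Fin h) → ℝ) (i j : ι) (a : Fin h) :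
    schoutenPP (bigPi h W Vv) z (Sum.inl i) (Sum.inl j) (Sum.inr a)
      = -2 * lieBV (Vv a) W (fun i' => z (Sum.inl i')) i j := by
  have dW : ∀ i j : ι, Differentiable ℝ (fun x => W x i j) :=
    fun i j => (hW i j).differentiable (by simp)
  have dV : ∀ a i, Differentiable ℝ (fun x => Vv a x i) :=
    fun a i => (hV a i).differentiable (by simp)
  set x := fun i' => z (Sum.inl i') with hx
  simp only [schoutenPP, bigPi, lieBV]
  rw [Fintype.sum_sum_type]
  have hz : ∀ b : Fin h,
      (Vv b x i * pd (Sum.inr b) (fun y => Vv a (fun i' => y (Sum.inl i')) j) z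
        + Vv b x j * pd (Sum.inr b) (fun y => -Vv a (fun i' => y (Sum.inl i')) i) z
        + 0 * pd (Sum.inr b) (fun y => W (fun i' => y (Sum.inl i')) i j) z) = 0 := by
    intro b
    have e1 : pd (Sum.inr b) (fun y : (ι ⊕ Fin h) → ℝ =>
        Vv a (fun i' => y (Sum.inl i')) j) z = 0 := pd_inr b (fun w => Vv a w j) (dV a j) z
    have e2 : pd (Sum.inr b) (fun y : (ι ⊕ Fin h) → ℝ =>
        -Vv a (fun i' => y (Sum.inl i')) i) z = 0 :=
      pd_inr b (fun w => -Vv a w i) (dV a i).neg z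
    rw [e1, e2]; ring
  rw [Finset.sum_congr rfl (fun b _ => hz b), Finset.sum_const, smul_zero, add_zero,
    Finset.mul_sum, Finset.mul_sum]
  refine Finset.sum_congr rfl (fun l _ => ?_)
  have e1 : pd (Sum.inl l) (fun y : (ι ⊕ Fin h) → ℝ =>
      Vv a (fun i' => y (Sum.inl i')) j) z = pd l (fun w => Vv a w j) x :=
    pd_inl l (fun w => Vv a w j) (dV a j) z
  have e2 : pd (Sum.inl l) (fun y : (ι ⊕ Fin h) → ℝ =>
      -Vv a (fun i' => y (Sum.inl i')) i) z = pd l (fun w => -Vv a w i) x :=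
    pd_inl l (fun w => -Vv a w i) (dV a i).neg z
  have e3 : pd (Sum.inl l) (fun y : (ι ⊕ Fin h) → ℝ =>
      W (fun i' => y (Sum.inl i')) i j) z = pd l (fun w => W w i j) x :=
    pd_inl l (fun w => W w i j) (dW i j) z
  have e4 : pd l (fun w => -Vv a w i) x = -pd l (fun w => Vv a w i) x :=
    pd_neg l (fun w => Vv a w i) x
  rw [e1, e2, e3, e4, hWskew x l j]
  ring

lemma comp_lrr {ι : Type*} [Fintype ι] [DecidableEq ι] {h : ℕ}
    (W : (ι → ℝ) → ι → ι → ℝ) (Vv : Fin h → (ι → ℝ) → ι → ℝ)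
    (hV : ∀ a i, ContDiff ℝ (⊤ : ℕ∞) fun x => Vv a x i)
    (z : (ι ⊕ Fin h) → ℝ) (i : ι) (a b : Fin h) :
    schoutenPP (bigPi h W Vv) z (Sum.inl i) (Sum.inr a) (Sum.inr b)
      = 2 * vbr (Vv a) (Vv b) (fun i' => z (Sum.inl i')) i := by
  have dV : ∀ a i, Differentiable ℝ (fun x => Vv a x i) :=
    fun a i => (hV a i).differentiable (by simp)
  set x := fun i' => z (Sum.inl i') with hx
  simp only [schoutenPP, bigPi, vbr]
  rw [Fintype.sum_sum_type]
  have hz : ∀ c : Fin h,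
      (Vv c x i * pd (Sum.inr c) (fun _ : (ι ⊕ Fin h) → ℝ => (0:ℝ)) z
        + 0 * pd (Sum.inr c) (fun y => -Vv b (fun i' => y (Sum.inl i')) i) z
        + 0 * pd (Sum.inr c) (fun y => Vv a (fun i' => y (Sum.inl i')) i) z) = 0 := by
    intro c
    have e0 : pd (Sum.inr c) (fun _ : (ι ⊕ Fin h) → ℝ => (0:ℝ)) z = 0 := by
      simp [pd]
    rw [e0]; ring
  rw [Finset.sum_congr rfl (fun c _ => hz c), Finset.sum_const, smul_zero, add_zero,
    Finset.mul_sum, Finset.mul_sum]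
  refine Finset.sum_congr rfl (fun l _ => ?_)
  have e0 : pd (Sum.inl l) (fun _ : (ι ⊕ Fin h) → ℝ => (0:ℝ)) z = 0 := by
    simp [pd]
  have e1 : pd (Sum.inl l) (fun y : (ι ⊕ Fin h) → ℝ =>
      -Vv b (fun i' => y (Sum.inl i')) i) z = pd l (fun w => -Vv b w i) x :=
    pd_inl l (fun w => -Vv b w i) (dV b i).neg z
  have e2 : pd (Sum.inl l) (fun y : (ι ⊕ Fin h) → ℝ =>
      Vv a (fun i' => y (Sum.inl i')) i) z = pd l (fun w => Vv a w i) x :=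
    pd_inl l (fun w => Vv a w i) (dV a i) z
  have e3 : pd l (fun w => -Vv b w i) x = -pd l (fun w => Vv b w i) x :=
    pd_neg l (fun w => Vv b w i) x
  rw [e0, e1, e2, e3]
  ring

lemma comp_rrr {ι : Type*} [Fintype ι] [DecidableEq ι] {h : ℕ}
    (W : (ι → ℝ) → ι → ι → ℝ) (Vv : Fin h → (ι → ℝ) → ι → ℝ)
    (z : (ι ⊕ Fin h) → ℝ) (a b c : Fin h) :
    schoutenPP (bigPi h W Vv) z (Sum.inr a) (Sum.inr b) (Sum.inr c) = 0 := by
  simp [schoutenPP, bigPi, pd]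


lemma schouten_cyc {ι : Type*} [Fintype ι] [DecidableEq ι]
    (P : (ι → ℝ) → ι → ι → ℝ) (x : ι → ℝ) (i j k : ι) :
    schoutenPP P x i j k = schoutenPP P x j k i := by
  unfold schoutenPP
  congr 1
  exact Finset.sum_congr rfl (fun l _ => by ring)

lemma comp_lll {ι : Type*} [Fintype ι] [DecidableEq ι] {h : ℕ}
    (W : (ι → ℝ) → ι → ι → ℝ) (Vv : Fin h → (ι → ℝ) → ι → ℝ)
    (hW : ∀ i j, ContDiff ℝ (⊤ : ℕ∞) fun x => W x i j)
    (z : (ι ⊕ Fin h) → ℝ) (i j k : ι) :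
    schoutenPP (bigPi h W Vv) z (Sum.inl i) (Sum.inl j) (Sum.inl k)
      = schoutenPP W (fun i' => z (Sum.inl i')) i j k := by
  have dW : ∀ i j : ι, Differentiable ℝ (fun x => W x i j) :=
    fun i j => (hW i j).differentiable (by simp)
  simp only [schoutenPP, bigPi]
  rw [Fintype.sum_sum_type]
  have hz : ∀ b : Fin h,
      (Vv b (fun i' => z (Sum.inl i')) i * pd (Sum.inr b)
          (fun y => W (fun i' => y (Sum.inl i')) j k) z
        + Vv b (fun i' => z (Sum.inl i')) j * pd (Sum.inr b)
          (fun y => W (fun i' => y (Sum.inl i')) k i) z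
        + Vv b (fun i' => z (Sum.inl i')) k * pd (Sum.inr b)
          (fun y => W (fun i' => y (Sum.inl i')) i j) z) = 0 := by
    intro b
    have e1 : pd (Sum.inr b) (fun y : (ι ⊕ Fin h) → ℝ =>
        W (fun i' => y (Sum.inl i')) j k) z = 0 := pd_inr b (fun w => W w j k) (dW j k) z
    have e2 : pd (Sum.inr b) (fun y : (ι ⊕ Fin h) → ℝ =>
        W (fun i' => y (Sum.inl i')) k i) z = 0 := pd_inr b (fun w => W w k i) (dW k i) z
    have e3 : pd (Sum.inr b) (fun y : (ι ⊕ Fin h) → ℝ =>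
        W (fun i' => y (Sum.inl i')) i j) z = 0 := pd_inr b (fun w => W w i j) (dW i j) z
    rw [e1, e2, e3]; ring
  rw [Finset.sum_congr rfl (fun b _ => hz b), Finset.sum_const, smul_zero, add_zero]
  congr 1
  refine Finset.sum_congr rfl (fun l _ => ?_)
  have e1 : pd (Sum.inl l) (fun y : (ι ⊕ Fin h) → ℝ =>
      W (fun i' => y (Sum.inl i')) j k) z = pd l (fun w => W w j k) (fun i' => z (Sum.inl i')) :=
    pd_inl l (fun w => W w j k) (dW j k) z
  have e2 : pd (Sum.inl l) (fun y : (ι ⊕ Fin h) → ℝ =>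
      W (fun i' => y (Sum.inl i')) k i) z = pd l (fun w => W w k i) (fun i' => z (Sum.inl i')) :=
    pd_inl l (fun w => W w k i) (dW k i) z
  have e3 : pd (Sum.inl l) (fun y : (ι ⊕ Fin h) → ℝ =>
      W (fun i' => y (Sum.inl i')) i j) z = pd l (fun w => W w i j) (fun i' => z (Sum.inl i')) :=
    pd_inl l (fun w => W w i j) (dW i j) z
  rw [e1, e2, e3]

/-- `[Π,Π] = 0` for `Π = W + Σₐ Vₐ ∧ ∂/∂tᵃ` iff `[W,W] = 0`, `L_{Vₐ}W = 0`
for all `a`, and `[Vₐ,V_b] = 0` for all `a,b`. -/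
theorem stmt5 (ι : Type*) [Fintype ι] [DecidableEq ι] (h : ℕ)
    (W : (ι → ℝ) → ι → ι → ℝ) (Vv : Fin h → (ι → ℝ) → ι → ℝ)
    (hWskew : ∀ x i j, W x i j = -W x j i)
    (hW : ∀ i j, ContDiff ℝ (⊤ : ℕ∞) fun x => W x i j)
    (hV : ∀ a i, ContDiff ℝ (⊤ : ℕ∞) fun x => Vv a x i) :
    (∀ z I J K, schoutenPP (bigPi h W Vv) z I J K = 0) ↔
      ((∀ x i j k, schoutenPP W x i j k = 0) ∧
       (∀ a, ∀ x i j, lieBV (Vv a) W x i j = 0) ∧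
       (∀ a b, ∀ x i, vbr (Vv a) (Vv b) x i = 0)) := by
  constructor
  · intro H
    refine ⟨?_, ?_, ?_⟩
    · intro x i j k
      have := H (Sum.elim x (fun _ => 0)) (Sum.inl i) (Sum.inl j) (Sum.inl k)
      rw [comp_lll W Vv hW] at this
      exact this
    · intro a x i j
      have := H (Sum.elim x (fun _ => 0)) (Sum.inl i) (Sum.inl j) (Sum.inr a)
      rw [comp_llr W Vv hWskew hW hV] at this
      have hxe : (fun i' => Sum.elim x (fun _ : Fin h => (0:ℝ)) (Sum.inl i')) = x := rfl
      rw [hxe] at this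
      linarith
    · intro a b x i
      have := H (Sum.elim x (fun _ => 0)) (Sum.inl i) (Sum.inr a) (Sum.inr b)
      rw [comp_lrr W Vv hV] at this
      have hxe : (fun i' => Sum.elim x (fun _ : Fin h => (0:ℝ)) (Sum.inl i')) = x := rfl
      rw [hxe] at this
      linarith
  · rintro ⟨h1, h2, h3⟩ z I J K
    match I, J, K with
    | Sum.inl i, Sum.inl j, Sum.inl k =>
      rw [comp_lll W Vv hW]; exact h1 _ i j k
    | Sum.inl i, Sum.inl j, Sum.inr a =>
      rw [comp_llr W Vv hWskew hW hV, h2 a]; ring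
    | Sum.inl i, Sum.inr a, Sum.inl j =>
      rw [schouten_cyc, schouten_cyc, comp_llr W Vv hWskew hW hV, h2 a]; ring
    | Sum.inr a, Sum.inl i, Sum.inl j =>
      rw [schouten_cyc, comp_llr W Vv hWskew hW hV, h2 a]; ring
    | Sum.inl i, Sum.inr a, Sum.inr b =>
      rw [comp_lrr W Vv hV, h3 a b]; ring
    | Sum.inr a, Sum.inl i, Sum.inr b =>
      rw [schouten_cyc, comp_lrr W Vv hV, h3 b a]; ring
    | Sum.inr a, Sum.inr b, Sum.inl i =>
      rw [schouten_cyc, schouten_cyc, comp_lrr W Vv hV, h3 a b]; ring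
    | Sum.inr a, Sum.inr b, Sum.inr c =>
      exact comp_rrr W Vv z a b c
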